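/- arXiv:2005.03069 — 6 statements merged into one kernel-verified Lean document; each statement's English description precedes it below -/
import Mathlib

section
/- Let H be a real Hilbert space, C a nonempty closed convex subset of H, T : C → C a nonexpansive map, f : C → C an α-contraction with 0 ≤ α < 1, and ε ∈ (0,1). If p ∈ C is a fixed point of T (T p = p) and ξ ∈ C satisfies ξ = ε·f(ξ) + (1−ε)·T(ξ), then ‖ξ − p‖ ≤ (1/(1−α))·‖f(p) − p‖. -/
/-- boundedness estimate for the implicit viscosity point. -/
theorem stmt1 {H : Type*} [NormedAddCommGroup H] [InnerProductSpace ℝ H] [CompleteSpace H]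
    (C : Set H) (hC_ne : C.Nonempty) (hC_closed : IsClosed C) (hC_convex : Convex ℝ C)
    (T : H → H) (hT_maps : ∀ x ∈ C, T x ∈ C)
    (hT_nonexp : ∀ x ∈ C, ∀ y ∈ C, ‖T x - T y‖ ≤ ‖x - y‖)
    (f : H → H) (hf_maps : ∀ x ∈ C, f x ∈ C)
    (α : ℝ) (hα0 : 0 ≤ α) (hα1 : α < 1)
    (hf_contr : ∀ x ∈ C, ∀ y ∈ C, ‖f x - f y‖ ≤ α * ‖x - y‖)
    (ε : ℝ) (hε0 : 0 < ε) (hε1 : ε < 1)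
    (p : H) (hp : p ∈ C) (hp_fix : T p = p)
    (ξ : H) (hξ : ξ ∈ C) (hξ_eq : ξ = ε • f ξ + (1 - ε) • T ξ) :
    ‖ξ - p‖ ≤ (1 / (1 - α)) * ‖f p - p‖ := by
  have h1 : ξ - p = ε • (f ξ - f p) + ε • (f p - p) + (1 - ε) • (T ξ - T p) := by
    rw [hp_fix]; nth_rewrite 1 [hξ_eq]; module
  have h2 : ‖ξ - p‖ ≤ ε * ‖f ξ - f p‖ + ε * ‖f p - p‖ + (1 - ε) * ‖T ξ - T p‖ := by
    rw [h1]
    calc ‖ε • (f ξ - f p) + ε • (f p - p) + (1 - ε) • (T ξ - T p)‖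
        ≤ ‖ε • (f ξ - f p) + ε • (f p - p)‖ + ‖(1 - ε) • (T ξ - T p)‖ := norm_add_le _ _
      _ ≤ ‖ε • (f ξ - f p)‖ + ‖ε • (f p - p)‖ + ‖(1 - ε) • (T ξ - T p)‖ := by
          gcongr; exact norm_add_le _ _
      _ = ε * ‖f ξ - f p‖ + ε * ‖f p - p‖ + (1 - ε) * ‖T ξ - T p‖ := by
          rw [norm_smul, norm_smul, norm_smul, Real.norm_eq_abs, Real.norm_eq_abs,
            abs_of_pos hε0, abs_of_pos (by linarith : (0:ℝ) < 1 - ε)]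
  have h3 := hf_contr ξ hξ p hp
  have h4 := hT_nonexp ξ hξ p hp
  have h5 : (1 - α) * ‖ξ - p‖ ≤ ‖f p - p‖ := by nlinarith [norm_nonneg (ξ - p)]
  rw [div_mul_eq_mul_div, le_div_iff₀ (by linarith : (0:ℝ) < 1 - α)]
  linarith
end

section
/- Let H be a real Hilbert space, C a nonempty closed convex subset of H, T : C → C a nonexpansive map, f : C → C an α-contraction with 0 ≤ α < 1, and ε ∈ (0,1). If p ∈ C is a fixed point of T (T p = p) and ξ ∈ C satisfies ξ = ε·f(ξ) + (1−ε)·T(ξ), then (1−α)·‖ξ − p‖² ≤ ⟨f(p) − p, ξ − p⟩. -/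
/-! Pairing `ξ - p = ε (f ξ - p) + (1 - ε) (T ξ - p)` with `ξ - p` and using `‖T ξ - p‖ ≤ ‖ξ - p‖`
gives `‖ξ - p‖² ≤ ⟪f ξ - p, ξ - p⟫`; splitting `f ξ - p = (f ξ - f p) + (f p - p)` and bounding
the first part by the contraction property leaves `α ‖ξ - p‖² + ⟪f p - p, ξ - p⟫`. -/

open scoped RealInnerProductSpace

section

variable {H : Type*} [NormedAddCommGroup H] [InnerProductSpace ℝ H]

theorem real_inner_le_mul_norm_sq_of_norm_le {a u : H} {c : ℝ} (h : ‖a‖ ≤ c * ‖u‖) :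
    ⟪a, u⟫ ≤ c * ‖u‖ ^ 2 :=
  calc ⟪a, u⟫ ≤ ‖a‖ * ‖u‖ := real_inner_le_norm a u
    _ ≤ c * ‖u‖ * ‖u‖ := by gcongr
    _ = c * ‖u‖ ^ 2 := by ring

theorem norm_sq_le_real_inner_of_eq_smul_add_smul {u v w : H} {ε : ℝ} (hε0 : 0 < ε)
    (hε1 : ε ≤ 1) (hw : ‖w‖ ≤ ‖u‖) (hu : u = ε • v + (1 - ε) • w) :
    ‖u‖ ^ 2 ≤ ⟪v, u⟫ := by
  have hwu : ⟪w, u⟫ ≤ ‖u‖ ^ 2 :=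
    (real_inner_le_mul_norm_sq_of_norm_le (c := 1) (by rwa [one_mul])).trans_eq (one_mul _)
  have hsplit : ‖u‖ ^ 2 = ε * ⟪v, u⟫ + (1 - ε) * ⟪w, u⟫ := by
    rw [← real_inner_self_eq_norm_sq]
    nth_rewrite 1 [hu]
    rw [inner_add_left, real_inner_smul_left, real_inner_smul_left]
  have hwu' : (1 - ε) * ⟪w, u⟫ ≤ (1 - ε) * ‖u‖ ^ 2 :=
    mul_le_mul_of_nonneg_left hwu (sub_nonneg.2 hε1)
  exact le_of_mul_le_mul_left (by linarith) hε0

end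

theorem stmt2_general {H : Type*} [NormedAddCommGroup H] [InnerProductSpace ℝ H]
    (C : Set H)
    (T : H → H)
    (hT_nonexp : ∀ x ∈ C, ∀ y ∈ C, ‖T x - T y‖ ≤ ‖x - y‖)
    (f : H → H)
    (α : ℝ)
    (hf_contr : ∀ x ∈ C, ∀ y ∈ C, ‖f x - f y‖ ≤ α * ‖x - y‖)
    (ε : ℝ) (hε0 : 0 < ε) (hε1 : ε < 1)
    (p : H) (hp : p ∈ C) (hp_fix : T p = p)
    (ξ : H) (hξ : ξ ∈ C) (hξ_eq : ξ = ε • f ξ + (1 - ε) • T ξ) :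
    (1 - α) * ‖ξ - p‖ ^ 2 ≤ inner ℝ (f p - p) (ξ - p) := by
  have hTξ : ‖T ξ - p‖ ≤ ‖ξ - p‖ := by
    simpa only [hp_fix] using hT_nonexp ξ hξ p hp
  have hdecomp : ξ - p = ε • (f ξ - p) + (1 - ε) • (T ξ - p) := by
    nth_rewrite 1 [hξ_eq]; module
  have hfξ : ‖ξ - p‖ ^ 2 ≤ ⟪f ξ - p, ξ - p⟫ :=
    norm_sq_le_real_inner_of_eq_smul_add_smul hε0 hε1.le hTξ hdecomp
  have hfp : ⟪f ξ - f p, ξ - p⟫ ≤ α * ‖ξ - p‖ ^ 2 :=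
    real_inner_le_mul_norm_sq_of_norm_le (hf_contr ξ hξ p hp)
  have hsplit : ⟪f ξ - p, ξ - p⟫ = ⟪f ξ - f p, ξ - p⟫ + ⟪f p - p, ξ - p⟫ := by
    rw [← inner_add_left, sub_add_sub_cancel]
  linarith

/-- variational inequality estimate for the implicit viscosity point. -/
theorem stmt2 {H : Type*} [NormedAddCommGroup H] [InnerProductSpace ℝ H] [CompleteSpace H]
    (C : Set H) (hC_ne : C.Nonempty) (hC_closed : IsClosed C) (hC_convex : Convex ℝ C)
    (T : H → H) (hT_maps : ∀ x ∈ C, T x ∈ C)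
    (hT_nonexp : ∀ x ∈ C, ∀ y ∈ C, ‖T x - T y‖ ≤ ‖x - y‖)
    (f : H → H) (hf_maps : ∀ x ∈ C, f x ∈ C)
    (α : ℝ) (hα0 : 0 ≤ α) (hα1 : α < 1)
    (hf_contr : ∀ x ∈ C, ∀ y ∈ C, ‖f x - f y‖ ≤ α * ‖x - y‖)
    (ε : ℝ) (hε0 : 0 < ε) (hε1 : ε < 1)
    (p : H) (hp : p ∈ C) (hp_fix : T p = p)
    (ξ : H) (hξ : ξ ∈ C) (hξ_eq : ξ = ε • f ξ + (1 - ε) • T ξ) :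
    (1 - α) * ‖ξ - p‖ ^ 2 ≤ inner ℝ (f p - p) (ξ - p) :=
  stmt2_general C T hT_nonexp f α hf_contr ε hε0 hε1 p hp hp_fix ξ hξ hξ_eq
end

section
/- Let H be a real Hilbert space, C a nonempty closed convex subset of H, T : C → C a nonexpansive map possessing a fixed point, f : C → C an α-contraction with 0 ≤ α < 1, and (ε_n) a sequence in (0,1) with ε_n → 0. If (ξ_n) is a sequence in C satisfying ξ_n = ε_n·f(ξ_n) + (1−ε_n)·T(ξ_n) for every n, then ‖ξ_n − T(ξ_n)‖ → 0 as n → ∞. -/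
open Filter

/-- asymptotic fixed point property of the implicit viscosity scheme. -/
theorem stmt3 {H : Type*} [NormedAddCommGroup H] [InnerProductSpace ℝ H] [CompleteSpace H]
    (C : Set H) (hC_ne : C.Nonempty) (hC_closed : IsClosed C) (hC_convex : Convex ℝ C)
    (T : H → H) (hT_maps : ∀ x ∈ C, T x ∈ C)
    (hT_nonexp : ∀ x ∈ C, ∀ y ∈ C, ‖T x - T y‖ ≤ ‖x - y‖)
    (hT_fix : ∃ p ∈ C, T p = p)
    (f : H → H) (hf_maps : ∀ x ∈ C, f x ∈ C)
    (α : ℝ) (hα0 : 0 ≤ α) (hα1 : α < 1)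
    (hf_contr : ∀ x ∈ C, ∀ y ∈ C, ‖f x - f y‖ ≤ α * ‖x - y‖)
    (ε : ℕ → ℝ) (hε : ∀ n, ε n ∈ Set.Ioo (0 : ℝ) 1)
    (hε_lim : Tendsto ε atTop (nhds 0))
    (ξ : ℕ → H) (hξ_mem : ∀ n, ξ n ∈ C)
    (hξ_eq : ∀ n, ξ n = ε n • f (ξ n) + (1 - ε n) • T (ξ n)) :
    Tendsto (fun n => ‖ξ n - T (ξ n)‖) atTop (nhds 0) := by
  obtain ⟨p, hpC, hpT⟩ := hT_fix
  set M : ℝ := ‖f p - p‖ / (1 - α) with hM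
  have h1α : (0:ℝ) < 1 - α := by linarith
  -- boundedness
  have hbd : ∀ n, ‖ξ n - p‖ ≤ M := by
    intro n
    have hεn := hε n
    have hdecomp : ξ n - p = ε n • (f (ξ n) - p) + (1 - ε n) • (T (ξ n) - p) := by
      conv_lhs => rw [hξ_eq n]
      module
    have hT' : ‖T (ξ n) - p‖ ≤ ‖ξ n - p‖ := by
      have := hT_nonexp (ξ n) (hξ_mem n) p hpC
      rwa [hpT] at this
    have hf' : ‖f (ξ n) - p‖ ≤ α * ‖ξ n - p‖ + ‖f p - p‖ := by
      calc ‖f (ξ n) - p‖ ≤ ‖f (ξ n) - f p‖ + ‖f p - p‖ := norm_sub_le_norm_sub_add_norm_sub _ _ _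
        _ ≤ α * ‖ξ n - p‖ + ‖f p - p‖ := by
            have := hf_contr (ξ n) (hξ_mem n) p hpC; linarith
    have hnorm : ‖ξ n - p‖ ≤ ε n * (α * ‖ξ n - p‖ + ‖f p - p‖) + (1 - ε n) * ‖ξ n - p‖ := by
      calc ‖ξ n - p‖ = ‖ε n • (f (ξ n) - p) + (1 - ε n) • (T (ξ n) - p)‖ := by rw [hdecomp]
        _ ≤ ‖ε n • (f (ξ n) - p)‖ + ‖(1 - ε n) • (T (ξ n) - p)‖ := norm_add_le _ _
        _ = ε n * ‖f (ξ n) - p‖ + (1 - ε n) * ‖T (ξ n) - p‖ := by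
            rw [norm_smul, norm_smul, Real.norm_eq_abs, Real.norm_eq_abs,
              abs_of_pos hεn.1, abs_of_pos (by linarith [hεn.2])]
        _ ≤ ε n * (α * ‖f (ξ n) - p‖ * 0 + (α * ‖ξ n - p‖ + ‖f p - p‖)) + (1 - ε n) * ‖ξ n - p‖ := by
            ring_nf
            nlinarith [hεn.1, hεn.2, norm_nonneg (f (ξ n) - p), norm_nonneg (T (ξ n) - p)]
        _ = ε n * (α * ‖ξ n - p‖ + ‖f p - p‖) + (1 - ε n) * ‖ξ n - p‖ := by ring
    have key : (1 - α) * ‖ξ n - p‖ ≤ ‖f p - p‖ := by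
      nlinarith [hεn.1]
    rw [hM, le_div_iff₀ h1α]
    nlinarith [key]
  -- the key identity: ξ n - T (ξ n) = ε n • (f (ξ n) - T (ξ n))
  have hK : ∀ n, ‖ξ n - T (ξ n)‖ ≤ ε n * ((1 + α) * M + ‖f p - p‖) := by
    intro n
    have hεn := hε n
    have hid : ξ n - T (ξ n) = ε n • (f (ξ n) - T (ξ n)) := by
      nth_rewrite 1 [hξ_eq n]
      module
    have hT' : ‖T (ξ n) - p‖ ≤ ‖ξ n - p‖ := by
      have := hT_nonexp (ξ n) (hξ_mem n) p hpC
      rwa [hpT] at this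
    have hf' : ‖f (ξ n) - p‖ ≤ α * ‖ξ n - p‖ + ‖f p - p‖ := by
      calc ‖f (ξ n) - p‖ ≤ ‖f (ξ n) - f p‖ + ‖f p - p‖ := norm_sub_le_norm_sub_add_norm_sub _ _ _
        _ ≤ α * ‖ξ n - p‖ + ‖f p - p‖ := by
            have := hf_contr (ξ n) (hξ_mem n) p hpC; linarith
    have hbdd := hbd n
    calc ‖ξ n - T (ξ n)‖ = ε n * ‖f (ξ n) - T (ξ n)‖ := by
          rw [hid, norm_smul, Real.norm_eq_abs, abs_of_pos hεn.1]
      _ ≤ ε n * ((1 + α) * M + ‖f p - p‖) := by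
          have h3 : ‖f (ξ n) - T (ξ n)‖ ≤ ‖f (ξ n) - p‖ + ‖T (ξ n) - p‖ := by
            have := norm_sub_le_norm_sub_add_norm_sub (f (ξ n)) p (T (ξ n))
            rwa [norm_sub_rev p] at this
          have h4 : ‖f (ξ n) - T (ξ n)‖ ≤ (1 + α) * M + ‖f p - p‖ := by
            nlinarith [mul_le_mul_of_nonneg_left hbdd hα0]
          exact mul_le_mul_of_nonneg_left h4 (le_of_lt hεn.1)
  have hlim : Tendsto (fun n => ε n * ((1 + α) * M + ‖f p - p‖)) atTop (nhds 0) := by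
    have := hε_lim.mul_const ((1 + α) * M + ‖f p - p‖)
    simpa using this
  refine squeeze_zero (fun n => norm_nonneg _) hK hlim
end

section
/- (Demiclosedness principle, used in the proof of Proposition 2.1.) Let H be a real Hilbert space, C a nonempty closed convex subset of H, and T : C → C a nonexpansive map. If (x_n) is a sequence in C converging weakly to x ∈ H and ‖x_n − T(x_n)‖ → 0, then x ∈ C and T x = x. -/
/-!
A weakly convergent sequence is bounded (Banach–Steinhaus), and a closed convex set is weakly
sequentially closed: if `v` is the nearest point of `C` to the weak limit `x₀`, then
`⟪x₀ - v, xₙ - v⟫ ≤ 0` for all `n`, and in the limit `‖x₀ - v‖² ≤ 0`. For the fixed point,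
expand `‖xₙ - T x₀‖² = ‖xₙ - x₀‖² + 2⟪xₙ - x₀, x₀ - T x₀⟫ + ‖x₀ - T x₀‖²` and bound the left side
by `(‖xₙ - T xₙ‖ + ‖xₙ - x₀‖)²` using nonexpansiveness; letting `n → ∞` gives `‖x₀ - T x₀‖² ≤ 0`.
-/

open Filter Topology

open scoped RealInnerProductSpace

section WeakLimit

variable {H : Type*} [NormedAddCommGroup H] [InnerProductSpace ℝ H]
  {x : ℕ → H} {x₀ : H}

theorem tendsto_inner_sub_of_tendsto_inner
    (hx : ∀ y : H, Tendsto (fun n => ⟪x n, y⟫) atTop (𝓝 ⟪x₀, y⟫)) (z y : H) :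
    Tendsto (fun n => ⟪x n - z, y⟫) atTop (𝓝 ⟪x₀ - z, y⟫) := by
  simp only [inner_sub_left]
  exact (hx y).sub_const _

theorem exists_norm_le_of_tendsto_inner [CompleteSpace H]
    (hx : ∀ y : H, Tendsto (fun n => ⟪x n, y⟫) atTop (𝓝 ⟪x₀, y⟫)) :
    ∃ M, ∀ n, ‖x n‖ ≤ M := by
  obtain ⟨M, hM⟩ := banach_steinhaus (g := fun n => innerSL ℝ (x n)) fun y => by
    obtain ⟨c, hc⟩ := (hx y).norm.bddAbove_range
    exact ⟨c, fun n => by simpa using hc (Set.mem_range_self n)⟩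
  exact ⟨M, fun n => by simpa [innerSL_apply_norm] using hM n⟩

theorem mem_of_tendsto_inner {C : Set H} (hC_complete : IsComplete C) (hC_convex : Convex ℝ C)
    (hx_mem : ∀ n, x n ∈ C) (hx : ∀ y : H, Tendsto (fun n => ⟪x n, y⟫) atTop (𝓝 ⟪x₀, y⟫)) :
    x₀ ∈ C := by
  obtain ⟨v, hvC, hv⟩ :=
    exists_norm_eq_iInf_of_complete_convex ⟨x 0, hx_mem 0⟩ hC_complete hC_convex x₀
  have hobtuse := (norm_eq_iInf_iff_real_inner_le_zero hC_convex hvC).mp hv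
  have hlim : Tendsto (fun n => ⟪x n - v, x₀ - v⟫) atTop (𝓝 ⟪x₀ - v, x₀ - v⟫) :=
    tendsto_inner_sub_of_tendsto_inner hx v (x₀ - v)
  have hle : ⟪x₀ - v, x₀ - v⟫ ≤ 0 :=
    le_of_tendsto' hlim fun n => real_inner_comm (x n - v) (x₀ - v) ▸ hobtuse _ (hx_mem n)
  rw [real_inner_self_nonpos, sub_eq_zero] at hle
  exact hle ▸ hvC

end WeakLimit

theorem two_inner_add_norm_sub_sq_le {H : Type*} [NormedAddCommGroup H] [InnerProductSpace ℝ H]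
    {u p a b : H} (h : ‖a - b‖ ≤ ‖u - p‖) :
    2 * ⟪u - p, p - b⟫ + ‖p - b‖ ^ 2 ≤ ‖u - a‖ * (‖u - a‖ + 2 * ‖u - p‖) := by
  have htri : ‖u - b‖ ≤ ‖u - a‖ + ‖u - p‖ :=
    calc ‖u - b‖ = ‖(u - a) + (a - b)‖ := by rw [sub_add_sub_cancel]
      _ ≤ ‖u - a‖ + ‖a - b‖ := norm_add_le _ _
      _ ≤ ‖u - a‖ + ‖u - p‖ := by gcongr
  have hexpand : ‖u - b‖ ^ 2 = ‖u - p‖ ^ 2 + 2 * ⟪u - p, p - b⟫ + ‖p - b‖ ^ 2 := by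
    rw [← norm_add_sq_real, sub_add_sub_cancel]
  nlinarith [pow_le_pow_left₀ (norm_nonneg _) htri 2]

theorem stmt5_general {H : Type*} [NormedAddCommGroup H] [InnerProductSpace ℝ H] [CompleteSpace H]
    (C : Set H) (hC_closed : IsClosed C) (hC_convex : Convex ℝ C)
    (T : H → H)
    (hT_nonexp : ∀ x ∈ C, ∀ y ∈ C, ‖T x - T y‖ ≤ ‖x - y‖)
    (x : ℕ → H) (hx_mem : ∀ n, x n ∈ C) (x₀ : H)
    (hx_weak : ∀ y : H, Tendsto (fun n => (inner ℝ (x n) y : ℝ)) atTop (nhds (inner ℝ x₀ y)))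
    (hx_reg : Tendsto (fun n => ‖x n - T (x n)‖) atTop (nhds 0)) :
    x₀ ∈ C ∧ T x₀ = x₀ := by
  have hx₀C : x₀ ∈ C := mem_of_tendsto_inner hC_closed.isComplete hC_convex hx_mem hx_weak
  refine ⟨hx₀C, ?_⟩
  set e := fun n => ‖x n - T (x n)‖
  obtain ⟨M, hM⟩ := exists_norm_le_of_tendsto_inner (tendsto_inner_sub_of_tendsto_inner hx_weak x₀)
  have hlimL : Tendsto (fun n => 2 * ⟪x n - x₀, x₀ - T x₀⟫ + ‖x₀ - T x₀‖ ^ 2) atTop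
      (𝓝 (‖x₀ - T x₀‖ ^ 2)) := by
    simpa using
      ((tendsto_inner_sub_of_tendsto_inner hx_weak x₀ (x₀ - T x₀)).const_mul 2).add_const _
  have hlimR : Tendsto (fun n => e n * (e n + 2 * M)) atTop (𝓝 0) := by
    simpa using hx_reg.mul (hx_reg.add_const (2 * M))
  have hbound n : 2 * ⟪x n - x₀, x₀ - T x₀⟫ + ‖x₀ - T x₀‖ ^ 2 ≤ e n * (e n + 2 * M) :=
    (two_inner_add_norm_sub_sq_le (hT_nonexp _ (hx_mem n) _ hx₀C)).trans (by gcongr; exact hM n)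
  have hsq : ‖x₀ - T x₀‖ ^ 2 ≤ 0 := le_of_tendsto_of_tendsto' hlimL hlimR hbound
  have hnorm : ‖x₀ - T x₀‖ = 0 := pow_eq_zero_iff two_ne_zero |>.mp (hsq.antisymm (by positivity))
  exact (sub_eq_zero.mp (norm_eq_zero.mp hnorm)).symm

/-- demiclosedness principle for nonexpansive maps in Hilbert space. -/
theorem stmt5 {H : Type*} [NormedAddCommGroup H] [InnerProductSpace ℝ H] [CompleteSpace H]
    (C : Set H) (hC_ne : C.Nonempty) (hC_closed : IsClosed C) (hC_convex : Convex ℝ C)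
    (T : H → H) (hT_maps : ∀ x ∈ C, T x ∈ C)
    (hT_nonexp : ∀ x ∈ C, ∀ y ∈ C, ‖T x - T y‖ ≤ ‖x - y‖)
    (x : ℕ → H) (hx_mem : ∀ n, x n ∈ C) (x₀ : H)
    (hx_weak : ∀ y : H, Tendsto (fun n => (inner ℝ (x n) y : ℝ)) atTop (nhds (inner ℝ x₀ y)))
    (hx_reg : Tendsto (fun n => ‖x n - T (x n)‖) atTop (nhds 0)) :
    x₀ ∈ C ∧ T x₀ = x₀ :=
  stmt5_general C hC_closed hC_convex T hT_nonexp x hx_mem x₀ hx_weak hx_reg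
end

section
/- (Single-map version of Theorem 1.1: viscosity implicit scheme.) Let H be a real Hilbert space, C a nonempty closed convex subset of H, T : C → C a nonexpansive map with Fix(T) ≠ ∅, f : C → C an α-contraction with 0 ≤ α < 1, and (ε_n) a sequence in (0,1) with ε_n → 0. Let (ξ_n) be the sequence in C determined by the implicit scheme ξ_n = ε_n·f(ξ_n) + (1−ε_n)·T(ξ_n). Then (ξ_n) converges strongly to a point q ∈ Fix(T), and q is the unique point of Fix(T) satisfying the variational inequality ⟨f(q) − q, p − q⟩ ≤ 0 for all p ∈ Fix(T). -/
/-!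
For `p ∈ Fix T` the scheme gives `‖ξₙ - p‖² ≤ ⟪f ξₙ - p, ξₙ - p⟫`, hence
`(1 - α) ‖ξₙ - p‖² ≤ ⟪f p - p, ξₙ - p⟫`; in particular `(ξₙ)` is bounded and `ξₙ - T ξₙ → 0`.
Instead of weak compactness we use the asymptotic centre `q` of `(ξₙ)` in `C`, the minimiser of
`x ↦ limsup ‖ξₙ - x‖²`, which exists and is unique because the parallelogram law makes this function
uniformly convex. As `ξₙ - T ξₙ → 0`, the point `T q` does no worse than `q`, so `T q = q`.
Minimality of `q` against `q + t (f q - q)` makes `⟪f q - q, ξₙ - q⟫` frequently small, so by the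
estimate with `p = q` a subsequence converges to `q`, and in the limit `q` solves the variational
inequality. A contraction admits at most one solution of it, and running the argument on every
subsequence gives convergence of the whole sequence.
-/

open Filter Topology Set Bornology
open scoped RealInnerProductSpace

theorem limsup_le_limsup_add_of_eventually_le {u v c : ℕ → ℝ} {L : ℝ}
    (hu : IsBoundedUnder (· ≥ ·) atTop u) (hv : IsBoundedUnder (· ≤ ·) atTop v)
    (hc : Tendsto c atTop (𝓝 L)) (h : ∀ᶠ n in atTop, u n ≤ v n + c n) :
    limsup u atTop ≤ limsup v atTop + L := by
  refine le_of_forall_pos_le_add fun δ hδ => limsup_le_of_le hu.isCoboundedUnder_le ?_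
  filter_upwards [h, eventually_lt_of_limsup_lt (lt_add_of_pos_right _ (half_pos hδ)) hv,
    hc.eventually (gt_mem_nhds (lt_add_of_pos_right L (half_pos hδ)))] with n h₁ h₂ h₃
  linarith

section AsymptoticCenter

variable {E : Type*} [NormedAddCommGroup E] {ξ : ℕ → E} {x y : E}

noncomputable def limsupSqDist (ξ : ℕ → E) (x : E) : ℝ :=
  limsup (fun n => ‖ξ n - x‖ ^ 2) atTop

theorem exists_forall_norm_sub_le (hξ : IsBounded (range ξ)) (x : E) :
    ∃ R, ∀ n, ‖ξ n - x‖ ≤ R := by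
  obtain ⟨R, hR⟩ := (Metric.isBounded_iff_subset_closedBall x).1 hξ
  exact ⟨R, fun n => mem_closedBall_iff_norm.1 (hR (mem_range_self n))⟩

theorem isBoundedUnder_ge_sq_norm_sub (ξ : ℕ → E) (x : E) :
    IsBoundedUnder (· ≥ ·) atTop (fun n => ‖ξ n - x‖ ^ 2) :=
  isBoundedUnder_of_eventually_ge (.of_forall fun _ => sq_nonneg _)

theorem isBoundedUnder_le_sq_norm_sub (hξ : IsBounded (range ξ)) (x : E) :
    IsBoundedUnder (· ≤ ·) atTop (fun n => ‖ξ n - x‖ ^ 2) := by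
  obtain ⟨R, hR⟩ := exists_forall_norm_sub_le hξ x
  exact isBoundedUnder_of ⟨R ^ 2, fun n => pow_le_pow_left₀ (norm_nonneg _) (hR n) 2⟩

theorem limsupSqDist_nonneg (hξ : IsBounded (range ξ)) (x : E) : 0 ≤ limsupSqDist ξ x :=
  le_limsup_of_frequently_le (.of_forall fun _ => sq_nonneg _) (isBoundedUnder_le_sq_norm_sub hξ x)

theorem limsupSqDist_le_add_of_eventually_le (hξ : IsBounded (range ξ)) {c : ℕ → ℝ} {L : ℝ}
    (hc : Tendsto c atTop (𝓝 L)) (h : ∀ᶠ n in atTop, ‖ξ n - y‖ ^ 2 ≤ ‖ξ n - x‖ ^ 2 + c n) :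
    limsupSqDist ξ y ≤ limsupSqDist ξ x + L :=
  limsup_le_limsup_add_of_eventually_le (isBoundedUnder_ge_sq_norm_sub ξ y)
    (isBoundedUnder_le_sq_norm_sub hξ x) hc h

theorem limsupSqDist_le_of_le_add_tendsto_zero {R : ℝ} {c : ℕ → ℝ} (hξ : IsBounded (range ξ))
    (hR : ∀ n, ‖ξ n - x‖ ≤ R) (hc₀ : ∀ n, 0 ≤ c n) (hc : Tendsto c atTop (𝓝 0))
    (h : ∀ n, ‖ξ n - y‖ ≤ ‖ξ n - x‖ + c n) : limsupSqDist ξ y ≤ limsupSqDist ξ x := by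
  have hlim : Tendsto (fun n => c n * (2 * R + c n)) atTop (𝓝 0) := by
    simpa using hc.mul (hc.const_add (2 * R))
  refine (limsupSqDist_le_add_of_eventually_le hξ hlim (.of_forall fun n => ?_)).trans_eq
    (add_zero _)
  have := pow_le_pow_left₀ (norm_nonneg _) (h n) 2
  nlinarith [hR n, hc₀ n]

variable [InnerProductSpace ℝ E]

theorem limsupSqDist_midpoint_le (hξ : IsBounded (range ξ)) (x y : E) :
    limsupSqDist ξ (midpoint ℝ x y) ≤
      limsupSqDist ξ x / 2 + limsupSqDist ξ y / 2 - ‖x - y‖ ^ 2 / 4 := by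
  refine le_of_forall_pos_le_add fun δ hδ =>
    limsup_le_of_le (isBoundedUnder_ge_sq_norm_sub ξ _).isCoboundedUnder_le ?_
  filter_upwards [eventually_lt_of_limsup_lt (lt_add_of_pos_right _ hδ)
      (isBoundedUnder_le_sq_norm_sub hξ x),
    eventually_lt_of_limsup_lt (lt_add_of_pos_right _ hδ)
      (isBoundedUnder_le_sq_norm_sub hξ y)] with n hx hy
  have apollonius :=
    EuclideanGeometry.dist_sq_add_dist_sq_eq_two_mul_dist_midpoint_sq_add_half_dist_sq (ξ n) x y
  simp only [dist_eq_norm] at apollonius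
  unfold limsupSqDist
  linarith

theorem limsupSqDist_le_add_of_forall_norm_sub_le {R : ℝ} (hξ : IsBounded (range ξ))
    (hR : ∀ n, ‖ξ n - y‖ ≤ R) : limsupSqDist ξ y ≤ limsupSqDist ξ x + 2 * R * ‖x - y‖ := by
  refine limsupSqDist_le_add_of_eventually_le hξ tendsto_const_nhds (.of_forall fun n => ?_)
  have hexpand := norm_sub_sq_real (ξ n - y) (x - y)
  rw [show ξ n - y - (x - y) = ξ n - x by abel] at hexpand
  have hcs := real_inner_le_norm (ξ n - y) (x - y)
  nlinarith [hR n, norm_nonneg (x - y)]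

theorem sq_norm_sub_le_of_forall_le_limsupSqDist {C : Set E} {d : ℝ} (hξ : IsBounded (range ξ))
    (hC : Convex ℝ C) (hd : ∀ z ∈ C, d ≤ limsupSqDist ξ z) (hx : x ∈ C) (hy : y ∈ C) :
    ‖x - y‖ ^ 2 ≤ 2 * (limsupSqDist ξ x - d) + 2 * (limsupSqDist ξ y - d) := by
  have := hd _ (hC.midpoint_mem hx hy)
  linarith [limsupSqDist_midpoint_le hξ x y]

theorem exists_isMinOn_limsupSqDist {C : Set E} (hξ : IsBounded (range ξ)) (hne : C.Nonempty)
    (hcomplete : IsComplete C) (hC : Convex ℝ C) : ∃ q ∈ C, IsMinOn (limsupSqDist ξ) C q := by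
  set d := sInf (limsupSqDist ξ '' C)
  have hbdd : BddBelow (limsupSqDist ξ '' C) :=
    ⟨0, forall_mem_image.2 fun z _ => limsupSqDist_nonneg hξ z⟩
  have hd : ∀ z ∈ C, d ≤ limsupSqDist ξ z := fun z hz => csInf_le hbdd (mem_image_of_mem _ hz)
  have hmin : ∀ k : ℕ, ∃ z ∈ C, limsupSqDist ξ z < d + 1 / (k + 1) := fun k => by
    obtain ⟨_, ⟨z, hz, rfl⟩, hlt⟩ := exists_lt_of_csInf_lt (hne.image _)
      (lt_add_of_pos_right d (Nat.one_div_pos_of_nat (n := k)))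
    exact ⟨z, hz, hlt⟩
  choose z hzC hz using hmin
  have hcauchy : CauchySeq z := by
    refine cauchySeq_of_le_tendsto_0 (fun N : ℕ => √(4 / (N + 1))) (fun n m N hn hm => ?_) ?_
    · have hsq := sq_norm_sub_le_of_forall_le_limsupSqDist hξ hC hd (hzC n) (hzC m)
      have hn' : 1 / ((n : ℝ) + 1) ≤ 1 / (N + 1) := Nat.one_div_le_one_div hn
      have hm' : 1 / ((m : ℝ) + 1) ≤ 1 / (N + 1) := Nat.one_div_le_one_div hm
      rw [dist_eq_norm, ← Real.sqrt_sq (norm_nonneg _)]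
      refine Real.sqrt_le_sqrt ?_
      linarith [hz n, hz m, mul_one_div (4 : ℝ) (N + 1)]
    · simpa [div_eq_mul_inv] using
        ((tendsto_one_div_add_atTop_nhds_zero_nat (𝕜 := ℝ)).const_mul 4).sqrt
  obtain ⟨q, hqC, hzq⟩ := cauchySeq_tendsto_of_isComplete hcomplete hzC hcauchy
  obtain ⟨R, hR⟩ := exists_forall_norm_sub_le hξ q
  have hqd : limsupSqDist ξ q ≤ d := by
    have hlim : Tendsto (fun k : ℕ => d + 1 / (k + 1) + 2 * R * ‖z k - q‖) atTop (𝓝 d) := by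
      simpa using ((tendsto_one_div_add_atTop_nhds_zero_nat.const_add d).add
        ((tendsto_iff_norm_sub_tendsto_zero.1 hzq).const_mul (2 * R)))
    refine ge_of_tendsto' hlim fun k => ?_
    linarith [limsupSqDist_le_add_of_forall_norm_sub_le (x := z k) hξ hR, hz k]
  exact ⟨q, hqC, fun z hz => hqd.trans (hd z hz)⟩

theorem eq_of_isMinOn_limsupSqDist {C : Set E} {q : E} (hξ : IsBounded (range ξ))
    (hC : Convex ℝ C) (hq : q ∈ C) (hmin : IsMinOn (limsupSqDist ξ) C q) (hy : y ∈ C)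
    (hle : limsupSqDist ξ y ≤ limsupSqDist ξ q) : y = q := by
  have := sq_norm_sub_le_of_forall_le_limsupSqDist hξ hC (fun z hz => hmin hz) hy hq
  rw [← sub_eq_zero, ← norm_eq_zero]
  nlinarith [norm_nonneg (y - q)]

theorem frequently_inner_lt_of_isMinOn_limsupSqDist {C : Set E} {q : E} {δ : ℝ}
    (hξ : IsBounded (range ξ)) (hC : Convex ℝ C) (hq : q ∈ C)
    (hmin : IsMinOn (limsupSqDist ξ) C q) (hy : y ∈ C) (hδ : 0 < δ) :
    ∃ᶠ n in atTop, ⟪y - q, ξ n - q⟫ < δ := by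
  by_contra! hfar
  set t := min 1 (δ / (‖y - q‖ ^ 2 + 1))
  have ht₀ : 0 < t := lt_min one_pos (by positivity)
  have ht : t * ‖y - q‖ ^ 2 ≤ δ := by
    have := min_le_right 1 (δ / (‖y - q‖ ^ 2 + 1))
    rw [le_div_iff₀ (by positivity)] at this
    nlinarith
  -- `t` is chosen so that `t ^ 2 * ‖y - q‖ ^ 2 - 2 * t * δ ≤ -t * δ < 0`.
  have hmem : q + t • (y - q) ∈ C := hC.add_smul_sub_mem hq hy ⟨ht₀.le, min_le_left _ _⟩
  have hdescent := limsupSqDist_le_add_of_eventually_le hξ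
    (tendsto_const_nhds (x := t ^ 2 * ‖y - q‖ ^ 2 - 2 * t * δ)) (x := q) (y := q + t • (y - q))
    (hfar.mono fun n hn => by
      rw [show ξ n - (q + t • (y - q)) = ξ n - q - t • (y - q) by abel, norm_sub_sq_real,
        inner_smul_right, norm_smul, Real.norm_of_nonneg ht₀.le, real_inner_comm]
      nlinarith)
  have hmin' : limsupSqDist ξ q ≤ limsupSqDist ξ (q + t • (y - q)) := hmin hmem
  nlinarith [mul_le_mul_of_nonneg_left ht ht₀.le]

end AsymptoticCenter

section ViscosityScheme

variable {H : Type*} [NormedAddCommGroup H] [InnerProductSpace ℝ H]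

theorem sq_norm_sub_le_inner_of_eq_smul_add_smul {x a b p : H} {t : ℝ} (ht₀ : 0 < t)
    (ht₁ : t ≤ 1) (hx : x = t • a + (1 - t) • b) (hb : ‖b - p‖ ≤ ‖x - p‖) :
    ‖x - p‖ ^ 2 ≤ ⟪a - p, x - p⟫ := by
  have hsplit : ‖x - p‖ ^ 2 = t * ⟪a - p, x - p⟫ + (1 - t) * ⟪b - p, x - p⟫ := by
    have hxp : x - p = t • (a - p) + (1 - t) • (b - p) := by rw [hx]; module
    rw [← real_inner_self_eq_norm_sq]
    nth_rewrite 1 [hxp]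
    rw [inner_add_left, real_inner_smul_left, real_inner_smul_left]
  have hb' : ⟪b - p, x - p⟫ ≤ ‖x - p‖ ^ 2 :=
    (real_inner_le_norm _ _).trans (by nlinarith [norm_nonneg (x - p)])
  nlinarith

theorem one_sub_mul_sq_norm_sub_le_inner {x a b p : H} {α : ℝ}
    (h : ‖x - p‖ ^ 2 ≤ ⟪a - p, x - p⟫) (hab : ‖a - b‖ ≤ α * ‖x - p‖) :
    (1 - α) * ‖x - p‖ ^ 2 ≤ ⟪b - p, x - p⟫ := by
  have hsplit : ⟪a - p, x - p⟫ = ⟪a - b, x - p⟫ + ⟪b - p, x - p⟫ := by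
    rw [← inner_add_left, sub_add_sub_cancel]
  nlinarith [real_inner_le_norm (a - b) (x - p), norm_nonneg (x - p)]

theorem eq_of_inner_le_zero_of_norm_sub_le {q q' a a' : H} {α : ℝ} (hα : α < 1)
    (h : ⟪a - q, q' - q⟫ ≤ 0) (h' : ⟪a' - q', q - q'⟫ ≤ 0) (ha : ‖a' - a‖ ≤ α * ‖q' - q‖) :
    q' = q := by
  have hsum : ‖q' - q‖ ^ 2 ≤ ⟪a' - a, q' - q⟫ := by
    have e : ⟪a' - a, q' - q⟫ = ‖q' - q‖ ^ 2 - ⟪a - q, q' - q⟫ - ⟪a' - q', q - q'⟫ := by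
      rw [← real_inner_self_eq_norm_sq]
      simp only [inner_sub_left, inner_sub_right, real_inner_comm q q', real_inner_comm q a,
        real_inner_comm q a', real_inner_comm q' a, real_inner_comm q' a']
      ring
    linarith
  have hcontr : ‖q' - q‖ ^ 2 ≤ α * ‖q' - q‖ ^ 2 := by
    nlinarith [real_inner_le_norm (a' - a) (q' - q),
      mul_le_mul_of_nonneg_right ha (norm_nonneg (q' - q))]
  by_contra hne
  have hpos : 0 < ‖q' - q‖ := norm_pos_iff.2 (sub_ne_zero.2 hne)
  nlinarith [mul_pos (sub_pos.2 hα) (pow_pos hpos 2)]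

theorem inner_sub_le_zero_of_tendsto {x a : ℕ → H} {q b p : H} (hx : Tendsto x atTop (𝓝 q))
    (ha : Tendsto a atTop (𝓝 b)) (h : ∀ m, ‖x m - p‖ ^ 2 ≤ ⟪a m - p, x m - p⟫) :
    ⟪b - q, p - q⟫ ≤ 0 := by
  have hlim : ‖q - p‖ ^ 2 ≤ ⟪b - p, q - p⟫ :=
    le_of_tendsto_of_tendsto' ((hx.sub_const p).norm.pow 2)
      ((ha.sub_const p).inner (hx.sub_const p)) h
  have e : ⟪b - p, q - p⟫ = ‖q - p‖ ^ 2 - ⟪b - q, p - q⟫ := by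
    rw [← real_inner_self_eq_norm_sq]
    simp only [inner_sub_left, inner_sub_right, real_inner_comm p q, real_inner_comm p b,
      real_inner_comm q b]
    ring
  linarith

variable {C : Set H} {T f : H → H} {α : ℝ} {ε : ℕ → ℝ} {ξ : ℕ → H}

theorem sq_norm_sub_le_inner_of_viscosity {x p : H} {t : ℝ}
    (hT_nonexp : ∀ x ∈ C, ∀ y ∈ C, ‖T x - T y‖ ≤ ‖x - y‖) (ht : t ∈ Ioo (0 : ℝ) 1)
    (hx : x ∈ C) (hx_eq : x = t • f x + (1 - t) • T x) (hp : p ∈ C) (hTp : T p = p) :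
    ‖x - p‖ ^ 2 ≤ ⟪f x - p, x - p⟫ :=
  sq_norm_sub_le_inner_of_eq_smul_add_smul ht.1 ht.2.le hx_eq
    (by simpa only [hTp] using hT_nonexp x hx p hp)

theorem isBounded_range_of_viscosity {p : H}
    (hT_nonexp : ∀ x ∈ C, ∀ y ∈ C, ‖T x - T y‖ ≤ ‖x - y‖) (hα1 : α < 1)
    (hf_contr : ∀ x ∈ C, ∀ y ∈ C, ‖f x - f y‖ ≤ α * ‖x - y‖) (hε : ∀ n, ε n ∈ Ioo (0 : ℝ) 1)
    (hξ_mem : ∀ n, ξ n ∈ C) (hξ_eq : ∀ n, ξ n = ε n • f (ξ n) + (1 - ε n) • T (ξ n))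
    (hp : p ∈ C) (hTp : T p = p) : IsBounded (range ξ) := by
  refine (Metric.isBounded_iff_subset_closedBall p).2
    ⟨‖f p - p‖ / (1 - α), range_subset_iff.2 fun n => ?_⟩
  have hkey := one_sub_mul_sq_norm_sub_le_inner
    (sq_norm_sub_le_inner_of_viscosity hT_nonexp (hε n) (hξ_mem n) (hξ_eq n) hp hTp)
    (hf_contr _ (hξ_mem n) p hp)
  rw [mem_closedBall_iff_norm, le_div_iff₀ (by linarith)]
  rcases (norm_nonneg (ξ n - p)).eq_or_lt with hzero | hpos
  · rw [← hzero, zero_mul]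
    exact norm_nonneg _
  · nlinarith [real_inner_le_norm (f p - p) (ξ n - p)]

theorem tendsto_sub_apply_of_viscosity (hξ : IsBounded (range ξ))
    (hT_nonexp : ∀ x ∈ C, ∀ y ∈ C, ‖T x - T y‖ ≤ ‖x - y‖) (hα0 : 0 ≤ α)
    (hf_contr : ∀ x ∈ C, ∀ y ∈ C, ‖f x - f y‖ ≤ α * ‖x - y‖)
    (hε_lim : Tendsto ε atTop (𝓝 0)) (hξ_mem : ∀ n, ξ n ∈ C)
    (hξ_eq : ∀ n, ξ n = ε n • f (ξ n) + (1 - ε n) • T (ξ n)) :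
    Tendsto (fun n => ξ n - T (ξ n)) atTop (𝓝 0) := by
  obtain ⟨R, hR⟩ := exists_forall_norm_sub_le hξ (ξ 0)
  have hbound : ∀ n, ‖f (ξ n) - T (ξ n)‖ ≤ α * R + ‖f (ξ 0) - T (ξ 0)‖ + R := fun n =>
    calc ‖f (ξ n) - T (ξ n)‖
        = ‖(f (ξ n) - f (ξ 0)) + (f (ξ 0) - T (ξ 0)) + (T (ξ 0) - T (ξ n))‖ := by
          congr 1; abel
      _ ≤ ‖f (ξ n) - f (ξ 0)‖ + ‖f (ξ 0) - T (ξ 0)‖ + ‖T (ξ 0) - T (ξ n)‖ := norm_add₃_le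
      _ ≤ α * R + ‖f (ξ 0) - T (ξ 0)‖ + R := by
          have hf := hf_contr _ (hξ_mem n) _ (hξ_mem 0)
          have hT := hT_nonexp _ (hξ_mem 0) _ (hξ_mem n)
          rw [norm_sub_rev (ξ 0)] at hT
          nlinarith [hR n]
  have hsub : ∀ n, ξ n - T (ξ n) = ε n • (f (ξ n) - T (ξ n)) := fun n => by
    nth_rewrite 1 [hξ_eq n]
    module
  simpa only [hsub] using hε_lim.zero_smul_isBoundedUnder_le (isBoundedUnder_of ⟨_, hbound⟩)

theorem exists_fixedPoint_mapClusterPt_of_viscosity (hC_complete : IsComplete C)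
    (hC_convex : Convex ℝ C) (hT_maps : ∀ x ∈ C, T x ∈ C)
    (hT_nonexp : ∀ x ∈ C, ∀ y ∈ C, ‖T x - T y‖ ≤ ‖x - y‖) (hT_fix : ∃ p ∈ C, T p = p)
    (hf_maps : ∀ x ∈ C, f x ∈ C) (hα0 : 0 ≤ α) (hα1 : α < 1)
    (hf_contr : ∀ x ∈ C, ∀ y ∈ C, ‖f x - f y‖ ≤ α * ‖x - y‖) (hε : ∀ n, ε n ∈ Ioo (0 : ℝ) 1)
    (hε_lim : Tendsto ε atTop (𝓝 0)) (hξ_mem : ∀ n, ξ n ∈ C)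
    (hξ_eq : ∀ n, ξ n = ε n • f (ξ n) + (1 - ε n) • T (ξ n)) :
    ∃ q ∈ C, T q = q ∧ MapClusterPt q atTop ξ := by
  obtain ⟨p, hp, hTp⟩ := hT_fix
  have hξ := isBounded_range_of_viscosity hT_nonexp hα1 hf_contr hε hξ_mem hξ_eq hp hTp
  obtain ⟨q, hq, hmin⟩ := exists_isMinOn_limsupSqDist hξ ⟨p, hp⟩ hC_complete hC_convex
  obtain ⟨R, hR⟩ := exists_forall_norm_sub_le hξ q
  have hTq : T q = q := by
    refine eq_of_isMinOn_limsupSqDist hξ hC_convex hq hmin (hT_maps q hq)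
      (limsupSqDist_le_of_le_add_tendsto_zero hξ hR (fun n => norm_nonneg _)
        (tendsto_norm_zero.comp
          (tendsto_sub_apply_of_viscosity hξ hT_nonexp hα0 hf_contr hε_lim hξ_mem hξ_eq))
        fun n => ?_)
    calc ‖ξ n - T q‖ ≤ ‖ξ n - T (ξ n)‖ + ‖T (ξ n) - T q‖ := norm_sub_le_norm_sub_add_norm_sub _ _ _
      _ ≤ ‖ξ n - q‖ + ‖ξ n - T (ξ n)‖ := by linarith [hT_nonexp _ (hξ_mem n) q hq]
  refine ⟨q, hq, hTq, Metric.nhds_basis_ball.mapClusterPt_iff_frequently.2 fun r hr => ?_⟩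
  have hα : 0 < 1 - α := by linarith
  refine (frequently_inner_lt_of_isMinOn_limsupSqDist hξ hC_convex hq hmin (hf_maps q hq)
    (by positivity : 0 < (1 - α) * r ^ 2)).mono fun n hn => ?_
  have hkey := one_sub_mul_sq_norm_sub_le_inner
    (sq_norm_sub_le_inner_of_viscosity hT_nonexp (hε n) (hξ_mem n) (hξ_eq n) hq hTq)
    (hf_contr _ (hξ_mem n) q hq)
  rw [Metric.mem_ball, dist_eq_norm]
  exact lt_of_pow_lt_pow_left₀ 2 hr.le (lt_of_mul_lt_mul_left (hkey.trans_lt hn) hα.le)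

theorem exists_fixedPoint_inner_le_zero_subseq_of_viscosity (hC_complete : IsComplete C)
    (hC_convex : Convex ℝ C) (hT_maps : ∀ x ∈ C, T x ∈ C)
    (hT_nonexp : ∀ x ∈ C, ∀ y ∈ C, ‖T x - T y‖ ≤ ‖x - y‖) (hT_fix : ∃ p ∈ C, T p = p)
    (hf_maps : ∀ x ∈ C, f x ∈ C) (hα0 : 0 ≤ α) (hα1 : α < 1)
    (hf_contr : ∀ x ∈ C, ∀ y ∈ C, ‖f x - f y‖ ≤ α * ‖x - y‖) (hε : ∀ n, ε n ∈ Ioo (0 : ℝ) 1)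
    (hε_lim : Tendsto ε atTop (𝓝 0)) (hξ_mem : ∀ n, ξ n ∈ C)
    (hξ_eq : ∀ n, ξ n = ε n • f (ξ n) + (1 - ε n) • T (ξ n)) :
    ∃ q ∈ C, T q = q ∧ (∀ p ∈ C, T p = p → ⟪f q - q, p - q⟫ ≤ 0) ∧
      ∃ ψ : ℕ → ℕ, Tendsto (ξ ∘ ψ) atTop (𝓝 q) := by
  obtain ⟨q, hq, hTq, hcluster⟩ := exists_fixedPoint_mapClusterPt_of_viscosity hC_complete
    hC_convex hT_maps hT_nonexp hT_fix hf_maps hα0 hα1 hf_contr hε hε_lim hξ_mem hξ_eq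
  obtain ⟨ψ, -, hψ⟩ := hcluster.tendsto_subseq
  have hfψ : Tendsto (fun m => f (ξ (ψ m))) atTop (𝓝 (f q)) :=
    tendsto_iff_norm_sub_tendsto_zero.2 <| squeeze_zero (fun _ => norm_nonneg _)
      (fun m => hf_contr _ (hξ_mem _) q hq)
      (by simpa using (tendsto_iff_norm_sub_tendsto_zero.1 hψ).const_mul α)
  refine ⟨q, hq, hTq, fun p hp hTp => inner_sub_le_zero_of_tendsto hψ hfψ fun m => ?_, ψ, hψ⟩
  exact sq_norm_sub_le_inner_of_viscosity hT_nonexp (hε _) (hξ_mem _) (hξ_eq _) hp hTp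

end ViscosityScheme

theorem stmt10_general {H : Type*} [NormedAddCommGroup H] [InnerProductSpace ℝ H] [CompleteSpace H]
    (C : Set H) (hC_closed : IsClosed C) (hC_convex : Convex ℝ C)
    (T : H → H) (hT_maps : ∀ x ∈ C, T x ∈ C)
    (hT_nonexp : ∀ x ∈ C, ∀ y ∈ C, ‖T x - T y‖ ≤ ‖x - y‖)
    (hT_fix : ∃ p ∈ C, T p = p)
    (f : H → H) (hf_maps : ∀ x ∈ C, f x ∈ C)
    (α : ℝ) (hα0 : 0 ≤ α) (hα1 : α < 1)
    (hf_contr : ∀ x ∈ C, ∀ y ∈ C, ‖f x - f y‖ ≤ α * ‖x - y‖)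
    (ε : ℕ → ℝ) (hε : ∀ n, ε n ∈ Set.Ioo (0 : ℝ) 1)
    (hε_lim : Tendsto ε atTop (nhds 0))
    (ξ : ℕ → H) (hξ_mem : ∀ n, ξ n ∈ C)
    (hξ_eq : ∀ n, ξ n = ε n • f (ξ n) + (1 - ε n) • T (ξ n)) :
    ∃ q, q ∈ C ∧ T q = q ∧ Tendsto ξ atTop (nhds q) ∧
      (∀ p ∈ C, T p = p → (inner ℝ (f q - q) (p - q) : ℝ) ≤ 0) ∧
      (∀ q', q' ∈ C → T q' = q' →
        (∀ p ∈ C, T p = p → (inner ℝ (f q' - q') (p - q') : ℝ) ≤ 0) → q' = q) := by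
  have hsubseq : ∀ ns : ℕ → ℕ, Tendsto ns atTop atTop → ∃ q ∈ C, T q = q ∧
      (∀ p ∈ C, T p = p → ⟪f q - q, p - q⟫ ≤ 0) ∧ ∃ ψ : ℕ → ℕ, Tendsto (ξ ∘ ns ∘ ψ) atTop (𝓝 q) :=
    fun ns hns => exists_fixedPoint_inner_le_zero_subseq_of_viscosity hC_closed.isComplete
      hC_convex hT_maps hT_nonexp hT_fix hf_maps hα0 hα1 hf_contr (fun n => hε (ns n))
      (hε_lim.comp hns) (fun n => hξ_mem (ns n)) (fun n => hξ_eq (ns n))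
  obtain ⟨q, hq, hTq, hVI, -⟩ := hsubseq id tendsto_id
  have huniq : ∀ q', q' ∈ C → T q' = q' → (∀ p ∈ C, T p = p → ⟪f q' - q', p - q'⟫ ≤ 0) →
      q' = q := fun q' hq' hTq' hVI' =>
    eq_of_inner_le_zero_of_norm_sub_le hα1 (hVI q' hq' hTq') (hVI' q hq hTq)
      (hf_contr q' hq' q hq)
  refine ⟨q, hq, hTq, tendsto_of_subseq_tendsto fun ns hns => ?_, hVI, huniq⟩
  obtain ⟨q', hq', hTq', hVI', ψ, hψ⟩ := hsubseq ns hns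
  exact ⟨ψ, huniq q' hq' hTq' hVI' ▸ hψ⟩

/-- strong convergence of the implicit viscosity scheme to the unique
solution of the associated variational inequality on the fixed point set. -/
theorem stmt10 {H : Type*} [NormedAddCommGroup H] [InnerProductSpace ℝ H] [CompleteSpace H]
    (C : Set H) (hC_ne : C.Nonempty) (hC_closed : IsClosed C) (hC_convex : Convex ℝ C)
    (T : H → H) (hT_maps : ∀ x ∈ C, T x ∈ C)
    (hT_nonexp : ∀ x ∈ C, ∀ y ∈ C, ‖T x - T y‖ ≤ ‖x - y‖)
    (hT_fix : ∃ p ∈ C, T p = p)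
    (f : H → H) (hf_maps : ∀ x ∈ C, f x ∈ C)
    (α : ℝ) (hα0 : 0 ≤ α) (hα1 : α < 1)
    (hf_contr : ∀ x ∈ C, ∀ y ∈ C, ‖f x - f y‖ ≤ α * ‖x - y‖)
    (ε : ℕ → ℝ) (hε : ∀ n, ε n ∈ Set.Ioo (0 : ℝ) 1)
    (hε_lim : Tendsto ε atTop (nhds 0))
    (ξ : ℕ → H) (hξ_mem : ∀ n, ξ n ∈ C)
    (hξ_eq : ∀ n, ξ n = ε n • f (ξ n) + (1 - ε n) • T (ξ n)) :
    ∃ q, q ∈ C ∧ T q = q ∧ Tendsto ξ atTop (nhds q) ∧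
      (∀ p ∈ C, T p = p → (inner ℝ (f q - q) (p - q) : ℝ) ≤ 0) ∧
      (∀ q', q' ∈ C → T q' = q' →
        (∀ p ∈ C, T p = p → (inner ℝ (f q' - q') (p - q') : ℝ) ≤ 0) → q' = q) :=
  stmt10_general C hC_closed hC_convex T hT_maps hT_nonexp hT_fix f hf_maps α hα0 hα1 hf_contr ε hε
    hε_lim ξ hξ_mem hξ_eq
end

section
/- (Browder-type strong convergence, underlying Proposition 2.1.) Let H be a real Hilbert space, C a nonempty closed convex subset of H, T : C → C a nonexpansive map with Fix(T) ≠ ∅, and x ∈ C. Let (ξ_n) be the sequence in C determined by ξ_n = (1/n)·x + (1 − 1/n)·T(ξ_n) for n ≥ 1. Then (ξ_n) converges strongly to the point of Fix(T) nearest to x, i.e. to the metric projection of x onto the closed convex set Fix(T). -/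
/-!
Since `ξ n - T (ξ n) = (x - ξ n) / (n - 1)` and `I - T` is monotone, pairing `ξ n` with a fixed
point `p` gives `⟪x - ξ n, ξ n - p⟫ ≥ 0`, hence `‖x - ξ n‖ ≤ ‖x - p‖`, and pairing `ξ n` with `ξ m`
for `n < m` gives `‖ξ n - ξ m‖² ≤ ‖x - ξ m‖² - ‖x - ξ n‖²`. So `‖x - ξ n‖²` increases to a finite
limit and `(ξ n)` is Cauchy. Its limit `q` is a fixed point because `ξ n - T (ξ n) → 0`, and it
inherits the bound `‖x - q‖ ≤ ‖x - p‖`.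
-/

open Filter Topology RealInnerProductSpace

theorem cauchySeq_of_dist_sq_le_sub {α : Type*} [PseudoMetricSpace α] {f : ℕ → α} {d : ℕ → ℝ}
    (hd : BddAbove (Set.range d)) (h : ∀ n m, n ≤ m → dist (f n) (f m) ^ 2 ≤ d m - d n) :
    CauchySeq f := by
  have hmono : Monotone d := fun n m hnm => sub_nonneg.1 ((sq_nonneg _).trans (h n m hnm))
  have hd_cauchy : CauchySeq d := (tendsto_atTop_ciSup hmono hd).cauchySeq
  rw [Metric.cauchySeq_iff'] at hd_cauchy ⊢
  intro ε hε
  obtain ⟨N, hN⟩ := hd_cauchy (ε ^ 2) (by positivity)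
  refine ⟨N, fun n hn => lt_of_pow_lt_pow_left₀ 2 hε.le ?_⟩
  calc dist (f n) (f N) ^ 2 ≤ d n - d N := by rw [dist_comm]; exact h N n hn
    _ ≤ dist (d n) (d N) := (le_abs_self _).trans_eq (Real.dist_eq _ _).symm
    _ < ε ^ 2 := hN n hn

theorem eq_of_tendsto_of_tendsto_sub_apply {E ι : Type*} [NormedAddCommGroup E] {C : Set E}
    {T : E → E} (hT : ∀ u ∈ C, ∀ v ∈ C, ‖T u - T v‖ ≤ ‖u - v‖) {l : Filter ι} [l.NeBot]
    {ξ : ι → E} {q : E} (hξC : ∀ i, ξ i ∈ C) (hqC : q ∈ C) (hq : Tendsto ξ l (𝓝 q))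
    (hres : Tendsto (fun i => ξ i - T (ξ i)) l (𝓝 0)) : T q = q := by
  have hTξ_q : Tendsto (fun i => T (ξ i)) l (𝓝 q) := by simpa using hq.sub hres
  have hTξ_Tq : Tendsto (fun i => T (ξ i)) l (𝓝 (T q)) :=
    tendsto_iff_norm_sub_tendsto_zero.2 <| squeeze_zero (fun _ => norm_nonneg _)
      (fun i => hT _ (hξC i) _ hqC) (tendsto_iff_norm_sub_tendsto_zero.1 hq)
  exact tendsto_nhds_unique hTξ_Tq hTξ_q

theorem sub_eq_smul_sub_of_eq_inv_smul_add {E : Type*} [AddCommGroup E] [Module ℝ E]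
    {t : ℝ} {x y ξ : E} (ht : t ≠ 0) (h : ξ = (1 / t) • x + (1 - 1 / t) • y) :
    x - ξ = (t - 1) • (ξ - y) := by
  rw [h]
  match_scalars
  · field_simp
  · field_simp; ring

section Resolvent

variable {H : Type*} [NormedAddCommGroup H] [InnerProductSpace ℝ H]

theorem inner_sub_sub_nonneg_of_norm_sub_le {u v Tu Tv : H} (h : ‖Tu - Tv‖ ≤ ‖u - v‖) :
    0 ≤ ⟪(u - Tu) - (v - Tv), u - v⟫ := by
  have hcs : ⟪Tu - Tv, u - v⟫ ≤ ‖u - v‖ * ‖u - v‖ :=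
    (real_inner_le_norm _ _).trans (mul_le_mul_of_nonneg_right h (norm_nonneg _))
  rw [show (u - Tu) - (v - Tv) = (u - v) - (Tu - Tv) by abel, inner_sub_left,
    real_inner_self_eq_norm_mul_norm]
  linarith

variable {T : H → H} {x ξ η p : H} {b c : ℝ}

theorem norm_sub_le_norm_sub_of_isFixedPt (hT : ‖T ξ - T p‖ ≤ ‖ξ - p‖) (hp : T p = p)
    (hb : 0 ≤ b) (hξ : x - ξ = b • (ξ - T ξ)) : ‖x - ξ‖ ≤ ‖x - p‖ := by
  have hmono := inner_sub_sub_nonneg_of_norm_sub_le hT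
  rw [hp, sub_self, sub_zero] at hmono
  have hinner : 0 ≤ ⟪x - ξ, ξ - p⟫ := by
    rw [hξ, real_inner_smul_left]
    exact mul_nonneg hb hmono
  have hsq : ‖x - p‖ ^ 2 = ‖x - ξ‖ ^ 2 + 2 * ⟪x - ξ, ξ - p⟫ + ‖ξ - p‖ ^ 2 := by
    rw [← norm_add_sq_real, sub_add_sub_cancel]
  exact pow_le_pow_iff_left₀ (norm_nonneg _) (norm_nonneg _) two_ne_zero |>.1
    (by nlinarith [sq_nonneg ‖ξ - p‖])

theorem norm_sub_sq_le_of_lt (hT : ‖T ξ - T η‖ ≤ ‖ξ - η‖) (hb : 0 ≤ b) (hbc : b < c)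
    (hξ : x - ξ = b • (ξ - T ξ)) (hη : x - η = c • (η - T η)) :
    ‖ξ - η‖ ^ 2 ≤ ‖x - η‖ ^ 2 - ‖x - ξ‖ ^ 2 := by
  set u := x - ξ
  set v := x - η
  have hvu : v - u = ξ - η := by simp only [u, v]; abel
  -- multiplying the monotonicity of `I - T` by `b * c` turns it into an inequality in `u` and `v`
  have hmono : 0 ≤ ⟪c • u - b • v, v - u⟫ := by
    have e : c • u - b • v = (b * c) • ((ξ - T ξ) - (η - T η)) := by rw [hξ, hη]; module
    rw [e, hvu, real_inner_smul_left]
    exact mul_nonneg (mul_nonneg hb (hb.trans hbc.le)) (inner_sub_sub_nonneg_of_norm_sub_le hT)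
  have hsplit : ⟪c • u - b • v, v - u⟫ = (c - b) * ⟪u, v - u⟫ - b * ‖v - u‖ ^ 2 := by
    rw [show c • u - b • v = (c - b) • u - b • (v - u) by module, inner_sub_left,
      real_inner_smul_left, real_inner_smul_left, real_inner_self_eq_norm_sq]
  have hinner : 0 ≤ ⟪u, v - u⟫ := by
    refine nonneg_of_mul_nonneg_right ?_ (sub_pos.2 hbc)
    nlinarith [sq_nonneg ‖v - u‖]
  have hsq : ‖v‖ ^ 2 = ‖u‖ ^ 2 + 2 * ⟪u, v - u⟫ + ‖v - u‖ ^ 2 := by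
    rw [← norm_add_sq_real, add_sub_cancel]
  rw [← hvu]
  linarith

theorem exists_isFixedPt_tendsto_of_eq_smul_sub [CompleteSpace H] {C : Set H} (hC : IsClosed C)
    (hT : ∀ u ∈ C, ∀ v ∈ C, ‖T u - T v‖ ≤ ‖u - v‖) (hpC : p ∈ C) (hp : T p = p)
    {β : ℕ → ℝ} (hβ0 : 0 ≤ β 0) (hβ : StrictMono β) (hβ_top : Tendsto β atTop atTop)
    {ξ : ℕ → H} (hξC : ∀ n, ξ n ∈ C) (hξ : ∀ n, x - ξ n = β n • (ξ n - T (ξ n))) :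
    ∃ q, q ∈ C ∧ T q = q ∧ Tendsto ξ atTop (𝓝 q) ∧
      ∀ p ∈ C, T p = p → ‖x - q‖ ≤ ‖x - p‖ := by
  have hβ_nonneg n : 0 ≤ β n := hβ0.trans (hβ.monotone (Nat.zero_le n))
  have hnear : ∀ p ∈ C, T p = p → ∀ n, ‖x - ξ n‖ ≤ ‖x - p‖ := fun p hpC hp n =>
    norm_sub_le_norm_sub_of_isFixedPt (hT _ (hξC n) _ hpC) hp (hβ_nonneg n) (hξ n)
  have hcauchy : CauchySeq ξ := by
    refine cauchySeq_of_dist_sq_le_sub (d := fun n => ‖x - ξ n‖ ^ 2) ⟨‖x - p‖ ^ 2, ?_⟩ ?_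
    · rintro _ ⟨n, rfl⟩
      exact pow_le_pow_left₀ (norm_nonneg _) (hnear p hpC hp n) 2
    · intro n m hnm
      rcases hnm.eq_or_lt with rfl | hlt
      · simp
      rw [dist_eq_norm]
      exact norm_sub_sq_le_of_lt (hT _ (hξC n) _ (hξC m)) (hβ_nonneg n) (hβ hlt) (hξ n) (hξ m)
  obtain ⟨q, hq⟩ := cauchySeq_tendsto_of_complete hcauchy
  have hqC : q ∈ C := hC.mem_of_tendsto hq (Eventually.of_forall hξC)
  have hres : Tendsto (fun n => ξ n - T (ξ n)) atTop (𝓝 0) := by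
    refine squeeze_zero_norm' ?_ (tendsto_const_nhds (x := ‖x - p‖).div_atTop hβ_top)
    filter_upwards [hβ_top.eventually_gt_atTop 0] with n hn
    rw [le_div_iff₀' hn, ← Real.norm_of_nonneg hn.le, ← norm_smul, ← hξ]
    exact hnear p hpC hp n
  refine ⟨q, hqC, eq_of_tendsto_of_tendsto_sub_apply hT hξC hqC hq hres, hq, ?_⟩
  exact fun p hpC hp => le_of_tendsto ((tendsto_const_nhds.sub hq).norm)
    (Eventually.of_forall (hnear p hpC hp))

end Resolvent

theorem stmt11_general {H : Type*} [NormedAddCommGroup H] [InnerProductSpace ℝ H] [CompleteSpace H]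
    (C : Set H) (hC_closed : IsClosed C)
    (T : H → H)
    (hT_nonexp : ∀ x ∈ C, ∀ y ∈ C, ‖T x - T y‖ ≤ ‖x - y‖)
    (hT_fix : ∃ p ∈ C, T p = p)
    (x : H)
    (ξ : ℕ → H) (hξ_mem : ∀ n, ξ n ∈ C)
    (hξ_eq : ∀ n : ℕ, 1 ≤ n →
      ξ n = (1 / (n : ℝ)) • x + (1 - 1 / (n : ℝ)) • T (ξ n)) :
    ∃ q, q ∈ C ∧ T q = q ∧ Tendsto ξ atTop (nhds q) ∧
      (∀ p ∈ C, T p = p → ‖x - q‖ ≤ ‖x - p‖) := by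
  obtain ⟨p, hpC, hp⟩ := hT_fix
  have hres (k : ℕ) : x - ξ (k + 1) = (k : ℝ) • (ξ (k + 1) - T (ξ (k + 1))) := by
    simpa using sub_eq_smul_sub_of_eq_inv_smul_add (by positivity) (hξ_eq (k + 1) le_add_self)
  obtain ⟨q, hqC, hTq, hq, hnear⟩ := exists_isFixedPt_tendsto_of_eq_smul_sub hC_closed hT_nonexp
    hpC hp (Nat.cast_nonneg 0) Nat.strictMono_cast tendsto_natCast_atTop_atTop (fun k => hξ_mem (k + 1)) hres
  exact ⟨q, hqC, hTq, (tendsto_add_atTop_iff_nat 1).1 hq, hnear⟩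

/-- Browder-type strong convergence to the nearest fixed point. -/
theorem stmt11 {H : Type*} [NormedAddCommGroup H] [InnerProductSpace ℝ H] [CompleteSpace H]
    (C : Set H) (hC_ne : C.Nonempty) (hC_closed : IsClosed C) (hC_convex : Convex ℝ C)
    (T : H → H) (hT_maps : ∀ x ∈ C, T x ∈ C)
    (hT_nonexp : ∀ x ∈ C, ∀ y ∈ C, ‖T x - T y‖ ≤ ‖x - y‖)
    (hT_fix : ∃ p ∈ C, T p = p)
    (x : H) (hx : x ∈ C)
    (ξ : ℕ → H) (hξ_mem : ∀ n, ξ n ∈ C)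
    (hξ_eq : ∀ n : ℕ, 1 ≤ n →
      ξ n = (1 / (n : ℝ)) • x + (1 - 1 / (n : ℝ)) • T (ξ n)) :
    ∃ q, q ∈ C ∧ T q = q ∧ Tendsto ξ atTop (nhds q) ∧
      (∀ p ∈ C, T p = p → ‖x - q‖ ≤ ‖x - p‖) :=
  stmt11_general C hC_closed T hT_nonexp hT_fix x ξ hξ_mem hξ_eq
end
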